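/- For each integer k with 0 ≤ k ≤ m, let λ_k : G → ℤ/4ℤ denote the homomorphism determined by λ_k(a_i)=1, λ_k(b_j)=1, λ_k(c_j)=0, λ_k(d_k)=1, λ_k(e_l)=2, λ_k(f_i)=1 for i≤k and λ_k(f_i)=0 for i>k, and λ_k(g_q)=2 (for all indices in the appropriate ranges). Then for 0 ≤ k, k' ≤ m, there exists an admissible automorphism α of G with λ_k∘α = λ_{k'} if and only if k = k'. -/
import Mathlib


open Monoid

/-- Index type for the factors of the free product `G(r,s,t,m,n)`. -/
abbrev Idx (r s t m n : ℕ) := Fin r ⊕ Fin s ⊕ Fin t ⊕ Fin m ⊕ Fin n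

/-- The factors: `r` copies of `ℤ`, `s` copies of `ℤ/4 × ℤ`, `t` copies of `ℤ/4`,
`m` copies of `ℤ/2 × ℤ`, and `n` copies of `ℤ/2` (written multiplicatively). -/
def Fac (r s t m n : ℕ) : Idx r s t m n → Type
  | .inl _ => Multiplicative ℤ
  | .inr (.inl _) => Multiplicative (ZMod 4 × ℤ)
  | .inr (.inr (.inl _)) => Multiplicative (ZMod 4)
  | .inr (.inr (.inr (.inl _))) => Multiplicative (ZMod 2 × ℤ)
  | .inr (.inr (.inr (.inr _))) => Multiplicative (ZMod 2)

instance (r s t m n : ℕ) : (i : Idx r s t m n) → Group (Fac r s t m n i)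
  | .inl _ => inferInstanceAs (Group (Multiplicative ℤ))
  | .inr (.inl _) => inferInstanceAs (Group (Multiplicative (ZMod 4 × ℤ)))
  | .inr (.inr (.inl _)) => inferInstanceAs (Group (Multiplicative (ZMod 4)))
  | .inr (.inr (.inr (.inl _))) => inferInstanceAs (Group (Multiplicative (ZMod 2 × ℤ)))
  | .inr (.inr (.inr (.inr _))) => inferInstanceAs (Group (Multiplicative (ZMod 2)))

/-- The group `G(r,s,t,m,n)`, the free product of the factors above; this is the orbifold
fundamental group `π₁^orb(V(Γ(v),G(v)))`. -/
abbrev OrbGroup (r s t m n : ℕ) := Monoid.CoprodI (Fac r s t m n)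

variable {r s t m n : ℕ}

/-- The free generator `a_i` of the `i`-th `ℤ` factor. -/
def genA (i : Fin r) : OrbGroup r s t m n :=
  CoprodI.of (show Fac r s t m n (.inl i) from Multiplicative.ofAdd (1 : ℤ))

/-- The order-4 generator `b_j` of the `j`-th `ℤ/4 × ℤ` factor. -/
def genB (j : Fin s) : OrbGroup r s t m n :=
  CoprodI.of (show Fac r s t m n (.inr (.inl j)) from
    Multiplicative.ofAdd ((1, 0) : ZMod 4 × ℤ))

/-- The infinite-order generator `c_j` of the `j`-th `ℤ/4 × ℤ` factor. -/
def genC (j : Fin s) : OrbGroup r s t m n :=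
  CoprodI.of (show Fac r s t m n (.inr (.inl j)) from
    Multiplicative.ofAdd ((0, 1) : ZMod 4 × ℤ))

/-- The order-4 generator `d_k` of the `k`-th `ℤ/4` factor. -/
def genD (k : Fin t) : OrbGroup r s t m n :=
  CoprodI.of (show Fac r s t m n (.inr (.inr (.inl k))) from
    Multiplicative.ofAdd (1 : ZMod 4))

/-- The order-2 generator `e_l` of the `l`-th `ℤ/2 × ℤ` factor. -/
def genE (l : Fin m) : OrbGroup r s t m n :=
  CoprodI.of (show Fac r s t m n (.inr (.inr (.inr (.inl l)))) from
    Multiplicative.ofAdd ((1, 0) : ZMod 2 × ℤ))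

/-- The infinite-order generator `f_l` of the `l`-th `ℤ/2 × ℤ` factor. -/
def genF (l : Fin m) : OrbGroup r s t m n :=
  CoprodI.of (show Fac r s t m n (.inr (.inr (.inr (.inl l)))) from
    Multiplicative.ofAdd ((0, 1) : ZMod 2 × ℤ))

/-- The order-2 generator `g_q` of the `q`-th `ℤ/2` factor. -/
def genG (q : Fin n) : OrbGroup r s t m n :=
  CoprodI.of (show Fac r s t m n (.inr (.inr (.inr (.inr q)))) from
    Multiplicative.ofAdd (1 : ZMod 2))

/-- An automorphism of `G(r,s,t,m,n)` is admissible (the algebraic characterization of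
realizable automorphisms from Lemma 2.2) if it sends each torsion-related generator to a
conjugate of the appropriate normal form. -/
def Admissible (α : OrbGroup r s t m n ≃* OrbGroup r s t m n) : Prop :=
  ∃ (σ : Equiv.Perm (Fin s)) (τ : Equiv.Perm (Fin t)) (γ : Equiv.Perm (Fin m))
    (ξ : Equiv.Perm (Fin n))
    (x : Fin s → OrbGroup r s t m n) (y : Fin t → OrbGroup r s t m n)
    (u : Fin m → OrbGroup r s t m n) (z : Fin n → OrbGroup r s t m n)
    (ε : Fin s → ℤ) (δ : Fin t → ℤ) (ε' : Fin m → ℤ) (δ' : Fin n → ℤ)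
    (v : Fin s → ℕ) (w : Fin m → ℕ),
    (∀ j, ε j = 1 ∨ ε j = -1) ∧ (∀ k, δ k = 1 ∨ δ k = -1) ∧
    (∀ l, ε' l = 1 ∨ ε' l = -1) ∧ (∀ q, δ' q = 1 ∨ δ' q = -1) ∧
    (∀ j, v j < 4) ∧ (∀ l, w l < 2) ∧
    (∀ j, α (genB j) = x j * genB (σ j) ^ ε j * (x j)⁻¹) ∧
    (∀ j, α (genC j) = x j * genB (σ j) ^ v j * genC (σ j) ^ ε j * (x j)⁻¹) ∧
    (∀ k, α (genD k) = y k * genD (τ k) ^ δ k * (y k)⁻¹) ∧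
    (∀ l, α (genE l) = u l * genE (γ l) ^ ε' l * (u l)⁻¹) ∧
    (∀ l, α (genF l) = u l * genE (γ l) ^ w l * genF (γ l) ^ ε' l * (u l)⁻¹) ∧
    (∀ q, α (genG q) = z q * genG (ξ q) ^ δ' q * (z q)⁻¹)

/-- `λ` is "finite injective": its restriction to each finite cyclic subgroup
`⟨b_j⟩`, `⟨d_k⟩`, `⟨e_l⟩`, `⟨g_q⟩` is injective. -/
def InjOnTorsion {r s t m n : ℕ}
    (lam : OrbGroup r s t m n →* Multiplicative (ZMod 4)) : Prop :=
  (∀ j : Fin s, Set.InjOn lam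
    ((Subgroup.zpowers (genB j) : Subgroup (OrbGroup r s t m n)) : Set (OrbGroup r s t m n))) ∧
  (∀ k : Fin t, Set.InjOn lam
    ((Subgroup.zpowers (genD k) : Subgroup (OrbGroup r s t m n)) : Set (OrbGroup r s t m n))) ∧
  (∀ l : Fin m, Set.InjOn lam
    ((Subgroup.zpowers (genE l) : Subgroup (OrbGroup r s t m n)) : Set (OrbGroup r s t m n))) ∧
  (∀ q : Fin n, Set.InjOn lam
    ((Subgroup.zpowers (genG q) : Subgroup (OrbGroup r s t m n)) : Set (OrbGroup r s t m n)))

/-- `λ` takes the normalized values of Lemma 2.4 with parameter `k`: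
`λ(a_i) = λ(b_j) = λ(d_k) = 1`, `λ(c_j) = 0`, `λ(e_l) = λ(g_q) = 2`, and `λ(f_i) = 1`
for the first `k` indices `i`, `λ(f_i) = 0` for the remaining ones. -/
def IsNormalized {r s t m n : ℕ} (k : ℕ)
    (lam : OrbGroup r s t m n →* Multiplicative (ZMod 4)) : Prop :=
  (∀ i : Fin r, lam (genA i) = Multiplicative.ofAdd (1 : ZMod 4)) ∧
  (∀ j : Fin s, lam (genB j) = Multiplicative.ofAdd (1 : ZMod 4)) ∧
  (∀ j : Fin s, lam (genC j) = Multiplicative.ofAdd (0 : ZMod 4)) ∧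
  (∀ k' : Fin t, lam (genD k') = Multiplicative.ofAdd (1 : ZMod 4)) ∧
  (∀ l : Fin m, lam (genE l) = Multiplicative.ofAdd (2 : ZMod 4)) ∧
  (∀ i : Fin m, ((i : ℕ) < k → lam (genF i) = Multiplicative.ofAdd (1 : ZMod 4)) ∧
    (k ≤ (i : ℕ) → lam (genF i) = Multiplicative.ofAdd (0 : ZMod 4))) ∧
  (∀ q : Fin n, lam (genG q) = Multiplicative.ofAdd (2 : ZMod 4))


section Aux

open Multiplicative

private lemma ofAdd_prod4_decomp (x : Multiplicative (ZMod 4 × ℤ)) :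
    x = (ofAdd ((1, 0) : ZMod 4 × ℤ)) ^ (x.toAdd.1.val) *
        (ofAdd ((0, 1) : ZMod 4 × ℤ)) ^ (x.toAdd.2) := by
  apply Multiplicative.toAdd.injective
  simp only [toAdd_mul, toAdd_pow, toAdd_zpow, toAdd_ofAdd]
  ext <;> simp [ZMod.natCast_val, ZMod.cast_id]

private lemma ofAdd_prod2_decomp (x : Multiplicative (ZMod 2 × ℤ)) :
    x = (ofAdd ((1, 0) : ZMod 2 × ℤ)) ^ (x.toAdd.1.val) *
        (ofAdd ((0, 1) : ZMod 2 × ℤ)) ^ (x.toAdd.2) := by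
  apply Multiplicative.toAdd.injective
  simp only [toAdd_mul, toAdd_pow, toAdd_zpow, toAdd_ofAdd]
  ext <;> simp [ZMod.natCast_val, ZMod.cast_id]

private lemma ofAdd_zmod4_decomp (x : Multiplicative (ZMod 4)) :
    x = (ofAdd ((1 : ZMod 4))) ^ (x.toAdd.val) := by
  apply Multiplicative.toAdd.injective
  simp only [toAdd_pow, toAdd_ofAdd]
  simp [ZMod.natCast_val, ZMod.cast_id]

private lemma ofAdd_zmod2_decomp (x : Multiplicative (ZMod 2)) :
    x = (ofAdd ((1 : ZMod 2))) ^ (x.toAdd.val) := by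
  apply Multiplicative.toAdd.injective
  simp only [toAdd_pow, toAdd_ofAdd]
  simp [ZMod.natCast_val, ZMod.cast_id]

private lemma of_decompB {r s t m n : ℕ} (j : Fin s)
    (x : Fac r s t m n (.inr (.inl j))) :
    CoprodI.of x = genB j ^ ((toAdd x).1.val) * genC j ^ ((toAdd x).2) := by
  rw [genB, genC, ← map_pow, ← map_zpow, ← map_mul]
  exact congrArg _ (ofAdd_prod4_decomp x)

private lemma of_decompD {r s t m n : ℕ} (k1 : Fin t)
    (x : Fac r s t m n (.inr (.inr (.inl k1)))) :
    CoprodI.of x = genD k1 ^ ((toAdd x).val) := by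
  rw [genD, ← map_pow]
  exact congrArg _ (ofAdd_zmod4_decomp x)

private lemma of_decompE {r s t m n : ℕ} (l : Fin m)
    (x : Fac r s t m n (.inr (.inr (.inr (.inl l))))) :
    CoprodI.of x = genE l ^ ((toAdd x).1.val) * genF l ^ ((toAdd x).2) := by
  rw [genE, genF, ← map_pow, ← map_zpow, ← map_mul]
  exact congrArg _ (ofAdd_prod2_decomp x)

private lemma of_decompG {r s t m n : ℕ} (q : Fin n)
    (x : Fac r s t m n (.inr (.inr (.inr (.inr q))))) :
    CoprodI.of x = genG q ^ ((toAdd x).val) := by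
  rw [genG, ← map_pow]
  exact congrArg _ (ofAdd_zmod2_decomp x)

private lemma normalized_unique {r s t m n : ℕ} {k : ℕ}
    {lam lam' : OrbGroup r s t m n →* Multiplicative (ZMod 4)}
    (h : IsNormalized k lam) (h' : IsNormalized k lam') : lam = lam' := by
  obtain ⟨hA, hB, hC, hD, hE, hF, hG⟩ := h
  obtain ⟨hA', hB', hC', hD', hE', hF', hG'⟩ := h'
  apply Monoid.CoprodI.ext_hom
  rintro (i | j | k1 | l | q)
  · exact MonoidHom.ext_mint ((hA i).trans (hA' i).symm)
  · ext x
    show lam (CoprodI.of x) = lam' (CoprodI.of x)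
    rw [of_decompB j x]
    simp only [map_mul, map_pow, map_zpow, hB j, hB' j, hC j, hC' j]
  · ext x
    show lam (CoprodI.of x) = lam' (CoprodI.of x)
    rw [of_decompD k1 x]
    simp only [map_pow, hD k1, hD' k1]
  · ext x
    show lam (CoprodI.of x) = lam' (CoprodI.of x)
    rw [of_decompE l x]
    simp only [map_mul, map_pow, map_zpow, hE l, hE' l]
    rcases lt_or_ge (l : ℕ) k with hl | hl
    · rw [(hF l).1 hl, (hF' l).1 hl]
    · rw [(hF l).2 hl, (hF' l).2 hl]
  · ext x
    show lam (CoprodI.of x) = lam' (CoprodI.of x)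
    rw [of_decompG q x]
    simp only [map_pow, hG q, hG' q]

private lemma admissible_refl {r s t m n : ℕ} :
    Admissible (MulEquiv.refl (OrbGroup r s t m n)) := by
  refine ⟨1, 1, 1, 1, fun _ => 1, fun _ => 1, fun _ => 1, fun _ => 1,
    fun _ => 1, fun _ => 1, fun _ => 1, fun _ => 1, fun _ => 0, fun _ => 0,
    fun _ => Or.inl rfl, fun _ => Or.inl rfl, fun _ => Or.inl rfl, fun _ => Or.inl rfl,
    fun _ => by norm_num, fun _ => by norm_num, ?_, ?_, ?_, ?_, ?_, ?_⟩ <;>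
    intro i <;> simp

private lemma card_filter_lt {m k : ℕ} (hk : k ≤ m) :
    Fintype.card {l : Fin m // (l : ℕ) < k} = k := by
  rw [Fintype.card_congr
    (⟨fun x => (⟨x.1.1, x.2⟩ : Fin k), fun i => ⟨⟨i.1, i.2.trans_le hk⟩, i.2⟩,
      fun x => rfl, fun i => rfl⟩ : {l : Fin m // (l : ℕ) < k} ≃ Fin k)]
  exact Fintype.card_fin k

end Aux

/-- Algebraic form of Proposition 2.5: two normalized homomorphisms `λ_k` and `λ_{k'}`
(with parameters `k, k' ≤ m`) are related by an admissible automorphism if and only if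
`k = k'`. -/
theorem normalized_equivalent_iff {r s t m n : ℕ} {k k' : ℕ} (hk : k ≤ m) (hk' : k' ≤ m)
    (lam lam' : OrbGroup r s t m n →* Multiplicative (ZMod 4))
    (hlam : IsNormalized k lam) (hlam' : IsNormalized k' lam') :
    (∃ α : OrbGroup r s t m n ≃* OrbGroup r s t m n,
      Admissible α ∧ lam.comp α.toMonoidHom = lam') ↔ k = k' := by
  constructor
  · rintro ⟨α, hadm, hcomp⟩
    obtain ⟨σ, τ, γ, ξ, x, y, u, z, ε, δ, ε', δ', v, w,
      hε, hδ, hε', hδ', hv, hw, hαB, hαC, hαD, hαE, hαF, hαG⟩ := hadm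
    have key : ∀ l : Fin m, ((l : ℕ) < k' ↔ ((γ l : Fin m) : ℕ) < k) := by
      intro l
      have hFl : lam (α (genF l)) = lam' (genF l) := DFunLike.congr_fun hcomp (genF l)
      rw [hαF l] at hFl
      simp only [map_mul, map_pow, map_zpow, map_inv] at hFl
      have heq : lam (genE (γ l)) ^ (w l) * lam (genF (γ l)) ^ (ε' l) = lam' (genF l) := by
        rw [← hFl, mul_assoc (lam (u l)), mul_comm (lam (u l)), mul_inv_cancel_right]
      have hw2 : w l = 0 ∨ w l = 1 := by have := hw l; omega
      have hE := hlam.2.2.2.2.1 (γ l)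
      constructor
      · intro hlk'
        by_contra hglk
        push_neg at hglk
        rw [(hlam.2.2.2.2.2.1 (γ l)).2 hglk, (hlam'.2.2.2.2.2.1 l).1 hlk', hE] at heq
        have := congrArg Multiplicative.toAdd heq
        simp only [toAdd_mul, toAdd_pow, toAdd_zpow, toAdd_ofAdd, smul_zero, add_zero] at this
        rcases hw2 with h | h <;> rw [h] at this <;> revert this <;> decide
      · intro hglk
        by_contra hlk'
        push_neg at hlk'
        rw [(hlam.2.2.2.2.2.1 (γ l)).1 hglk, (hlam'.2.2.2.2.2.1 l).2 hlk', hE] at heq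
        have := congrArg Multiplicative.toAdd heq
        simp only [toAdd_mul, toAdd_pow, toAdd_zpow, toAdd_ofAdd] at this
        rcases hw2 with h | h <;> rcases hε' l with h2 | h2 <;>
          rw [h, h2] at this <;> revert this <;> decide
    have hcard : Fintype.card {l : Fin m // (l : ℕ) < k'} =
        Fintype.card {l : Fin m // (l : ℕ) < k} :=
      Fintype.card_congr (Equiv.subtypeEquiv γ key)
    rw [card_filter_lt hk', card_filter_lt hk] at hcard
    omega
  · intro hkk
    subst hkk
    exact ⟨MulEquiv.refl _, admissible_refl,
      (MonoidHom.comp_id lam).symm ▸ normalized_unique hlam hlam'⟩
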